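/- For all MiniJl types τ1 and τ2, declarative subtyping τ1 ≤d τ2 holds if and only if matching-based semantic subtyping τ1 ≤sem τ2 holds (Theorem: Correctness of Declarative Subtyping). -/
import Mathlib


/-- MiniJl types -/
inductive Ty : Type
  | pair : Ty → Ty → Ty
  | union : Ty → Ty → Ty
  | int : Ty
  | flt : Ty
  | cmplx : Ty
  | str : Ty
  | real : Ty
  | num : Ty
deriving DecidableEq

/-- Value types: concrete nominal types and pairs of value types. -/
inductive ValTy : Ty → Prop
  | int : ValTy .int
  | flt : ValTy .flt
  | cmplx : ValTy .cmplx
  | str : ValTy .str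
  | pair {v1 v2 : Ty} : ValTy v1 → ValTy v2 → ValTy (.pair v1 v2)

/-- Matching relation `v ⋖ τ`. -/
inductive Matches : Ty → Ty → Prop
  | int : Matches .int .int
  | flt : Matches .flt .flt
  | cmplx : Matches .cmplx .cmplx
  | str : Matches .str .str
  | intReal : Matches .int .real
  | fltReal : Matches .flt .real
  | intNum : Matches .int .num
  | fltNum : Matches .flt .num
  | cmplxNum : Matches .cmplx .num
  | pair {v1 v2 t1 t2 : Ty} : Matches v1 t1 → Matches v2 t2 →
      Matches (.pair v1 v2) (.pair t1 t2)
  | unionL {v t1 t2 : Ty} : Matches v t1 → Matches v (.union t1 t2)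
  | unionR {v t1 t2 : Ty} : Matches v t2 → Matches v (.union t1 t2)

/-- Matching-based semantic subtyping. -/
def SemSub (t1 t2 : Ty) : Prop :=
  ∀ v : Ty, ValTy v → Matches v t1 → Matches v t2

/-- Tag interpretation of types as sets of value types. -/
def interp : Ty → Set Ty
  | .int => {.int}
  | .flt => {.flt}
  | .cmplx => {.cmplx}
  | .str => {.str}
  | .real => {.int, .flt}
  | .num => {.int, .flt, .cmplx}
  | .pair t1 t2 => {v | ∃ v1 ∈ interp t1, ∃ v2 ∈ interp t2, v = .pair v1 v2}
  | .union t1 t2 => interp t1 ∪ interp t2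

/-- Declarative subtyping. -/
inductive DeclSub : Ty → Ty → Prop
  | refl (t : Ty) : DeclSub t t
  | trans {t1 t2 t3 : Ty} : DeclSub t1 t2 → DeclSub t2 t3 → DeclSub t1 t3
  | intReal : DeclSub .int .real
  | fltReal : DeclSub .flt .real
  | realNum : DeclSub .real .num
  | cmplxNum : DeclSub .cmplx .num
  | realUnion : DeclSub .real (.union .int .flt)
  | numUnion : DeclSub .num (.union .real .cmplx)
  | pair {t1 t2 t1' t2' : Ty} : DeclSub t1 t1' → DeclSub t2 t2' →
      DeclSub (.pair t1 t2) (.pair t1' t2')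
  | unionL {t1 t2 t' : Ty} : DeclSub t1 t' → DeclSub t2 t' →
      DeclSub (.union t1 t2) t'
  | unionR1 (t1 t2 : Ty) : DeclSub t1 (.union t1 t2)
  | unionR2 (t1 t2 : Ty) : DeclSub t2 (.union t1 t2)
  | distr1 (t11 t12 t2 : Ty) :
      DeclSub (.pair (.union t11 t12) t2)
        (.union (.pair t11 t2) (.pair t12 t2))
  | distr2 (t1 t21 t22 : Ty) :
      DeclSub (.pair t1 (.union t21 t22))
        (.union (.pair t1 t21) (.pair t1 t22))

/-- Normal form predicate. -/
inductive InNF : Ty → Prop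
  | val {v : Ty} : ValTy v → InNF v
  | union {t1 t2 : Ty} : InNF t1 → InNF t2 → InNF (.union t1 t2)

/-- Union of pairs -/
def unprs : Ty → Ty → Ty
  | .union t11 t12, t2 => .union (unprs t11 t2) (unprs t12 t2)
  | t1, .union t21 t22 => .union (unprs t1 t21) (unprs t1 t22)
  | t1, t2 => .pair t1 t2

/-- Normalization function. -/
def NF : Ty → Ty
  | .int => .int
  | .flt => .flt
  | .cmplx => .cmplx
  | .str => .str
  | .real => .union .int .flt
  | .num => .union (.union .int .flt) .cmplx
  | .pair t1 t2 => unprs (NF t1) (NF t2)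
  | .union t1 t2 => .union (NF t1) (NF t2)

/-- Reductive subtyping. -/
inductive RedSub : Ty → Ty → Prop
  | intRefl : RedSub .int .int
  | fltRefl : RedSub .flt .flt
  | cmplxRefl : RedSub .cmplx .cmplx
  | strRefl : RedSub .str .str
  | intReal : RedSub .int .real
  | fltReal : RedSub .flt .real
  | cmplxNum : RedSub .cmplx .num
  | intNum : RedSub .int .num
  | fltNum : RedSub .flt .num
  | pair {t1 t2 t1' t2' : Ty} : RedSub t1 t1' → RedSub t2 t2' →
      RedSub (.pair t1 t2) (.pair t1' t2')
  | unionL {t1 t2 t' : Ty} : RedSub t1 t' → RedSub t2 t' →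
      RedSub (.union t1 t2) t'
  | unionR1 {t t1' t2' : Ty} : RedSub t t1' → RedSub t (.union t1' t2')
  | unionR2 {t t1' t2' : Ty} : RedSub t t2' → RedSub t (.union t1' t2')
  | nf {t t' : Ty} : RedSub (NF t) t' → RedSub t t'

lemma matches_self {v : Ty} (h : ValTy v) : Matches v v := by
  induction h with
  | int => exact .int
  | flt => exact .flt
  | cmplx => exact .cmplx
  | str => exact .str
  | pair _ _ ih1 ih2 => exact .pair ih1 ih2

lemma decl_of_matches {v t : Ty} (h : Matches v t) : DeclSub v t := by
  induction h with
  | int => exact .refl _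
  | flt => exact .refl _
  | cmplx => exact .refl _
  | str => exact .refl _
  | intReal => exact .intReal
  | fltReal => exact .fltReal
  | intNum => exact .trans .intReal .realNum
  | fltNum => exact .trans .fltReal .realNum
  | cmplxNum => exact .cmplxNum
  | pair _ _ ih1 ih2 => exact .pair ih1 ih2
  | unionL _ ih => exact .trans ih (.unionR1 _ _)
  | unionR _ ih => exact .trans ih (.unionR2 _ _)

lemma decl_sound {t1 t2 : Ty} (h : DeclSub t1 t2) : SemSub t1 t2 := by
  induction h with
  | refl t => exact fun v _ hm => hm
  | trans _ _ ih1 ih2 => exact fun v hv hm => ih2 v hv (ih1 v hv hm)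
  | intReal => intro v _ hm; cases hm; exact .intReal
  | fltReal => intro v _ hm; cases hm; exact .fltReal
  | realNum =>
      intro v _ hm; cases hm
      · exact .intNum
      · exact .fltNum
  | cmplxNum => intro v _ hm; cases hm; exact .cmplxNum
  | realUnion =>
      intro v _ hm; cases hm
      · exact .unionL .int
      · exact .unionR .flt
  | numUnion =>
      intro v _ hm; cases hm
      · exact .unionL .intReal
      · exact .unionL .fltReal
      · exact .unionR .cmplx
  | pair _ _ ih1 ih2 =>
      intro v hv hm
      cases hm with
      | pair m1 m2 =>
        cases hv with
        | pair hv1 hv2 => exact .pair (ih1 _ hv1 m1) (ih2 _ hv2 m2)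
  | unionL _ _ ih1 ih2 =>
      intro v hv hm
      cases hm with
      | unionL m => exact ih1 v hv m
      | unionR m => exact ih2 v hv m
  | unionR1 t1 t2 => exact fun v _ hm => .unionL hm
  | unionR2 t1 t2 => exact fun v _ hm => .unionR hm
  | distr1 t11 t12 t2 =>
      intro v hv hm
      cases hm with
      | pair m1 m2 =>
        cases m1 with
        | unionL m => exact .unionL (.pair m m2)
        | unionR m => exact .unionR (.pair m m2)
  | distr2 t1 t21 t22 =>
      intro v hv hm
      cases hm with
      | pair m1 m2 =>
        cases m2 with
        | unionL m => exact .unionL (.pair m1 m)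
        | unionR m => exact .unionR (.pair m1 m)

lemma innf_sem_decl {s t : Ty} (h : InNF s) (hsem : SemSub s t) : DeclSub s t := by
  induction h generalizing t with
  | val hv => exact decl_of_matches (hsem _ hv (matches_self hv))
  | union h1 h2 ih1 ih2 =>
      exact .unionL (ih1 fun v hv hm => hsem v hv (.unionL hm))
        (ih2 fun v hv hm => hsem v hv (.unionR hm))

lemma unprs_decl : ∀ t1 t2 : Ty,
    DeclSub (.pair t1 t2) (unprs t1 t2) ∧ DeclSub (unprs t1 t2) (.pair t1 t2) := by
  intro t1
  induction t1 with
  | union a b iha ihb =>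
      intro t2
      simp only [unprs]
      constructor
      · exact .trans (.distr1 a b t2)
          (.unionL (.trans (iha t2).1 (.unionR1 _ _))
                   (.trans (ihb t2).1 (.unionR2 _ _)))
      · exact .unionL (.trans (iha t2).2 (.pair (.unionR1 _ _) (.refl _)))
                      (.trans (ihb t2).2 (.pair (.unionR2 _ _) (.refl _)))
  | pair a b iha ihb =>
      intro t2
      induction t2 with
      | union c d ihc ihd =>
          simp only [unprs]
          exact ⟨.trans (.distr2 _ c d)
              (.unionL (.trans ihc.1 (.unionR1 _ _)) (.trans ihd.1 (.unionR2 _ _))),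
            .unionL (.trans ihc.2 (.pair (.refl _) (.unionR1 _ _)))
                    (.trans ihd.2 (.pair (.refl _) (.unionR2 _ _)))⟩
      | _ => simp only [unprs]; exact ⟨.refl _, .refl _⟩
  | _ =>
      intro t2
      induction t2 with
      | union c d ihc ihd =>
          simp only [unprs]
          exact ⟨.trans (.distr2 _ c d)
              (.unionL (.trans ihc.1 (.unionR1 _ _)) (.trans ihd.1 (.unionR2 _ _))),
            .unionL (.trans ihc.2 (.pair (.refl _) (.unionR1 _ _)))
                    (.trans ihd.2 (.pair (.refl _) (.unionR2 _ _)))⟩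
      | _ => simp only [unprs]; exact ⟨.refl _, .refl _⟩

lemma innf_unprs : ∀ {a : Ty}, InNF a → ∀ {b : Ty}, InNF b → InNF (unprs a b) := by
  intro a ha
  induction ha with
  | union h1 h2 ih1 ih2 =>
      intro b hb
      simp only [unprs]
      exact .union (ih1 hb) (ih2 hb)
  | @val v hv =>
      intro b hb
      induction hb with
      | union h1 h2 ih1 ih2 =>
          cases hv <;> simp only [unprs] <;> exact .union ih1 ih2
      | @val w hw =>
          cases hv <;> cases hw <;> simp only [unprs] <;>
            exact .val (.pair (by constructor <;> assumption) (by constructor <;> assumption))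

lemma innf_NF : ∀ t : Ty, InNF (NF t) := by
  intro t
  induction t with
  | pair a b iha ihb => exact innf_unprs iha ihb
  | union a b iha ihb => exact .union iha ihb
  | int => exact .val .int
  | flt => exact .val .flt
  | cmplx => exact .val .cmplx
  | str => exact .val .str
  | real => exact .union (.val .int) (.val .flt)
  | num => exact .union (.union (.val .int) (.val .flt)) (.val .cmplx)

lemma nf_decl : ∀ t : Ty, DeclSub t (NF t) ∧ DeclSub (NF t) t := by
  intro t
  induction t with
  | pair a b iha ihb =>
      exact ⟨.trans (.pair iha.1 ihb.1) (unprs_decl _ _).1,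
        .trans (unprs_decl _ _).2 (.pair iha.2 ihb.2)⟩
  | union a b iha ihb =>
      exact ⟨.unionL (.trans iha.1 (.unionR1 _ _)) (.trans ihb.1 (.unionR2 _ _)),
        .unionL (.trans iha.2 (.unionR1 _ _)) (.trans ihb.2 (.unionR2 _ _))⟩
  | real => exact ⟨.realUnion, .unionL .intReal .fltReal⟩
  | num =>
      exact ⟨.trans .numUnion
          (.unionL (.trans .realUnion (.unionR1 _ _)) (.unionR2 _ _)),
        .unionL (.unionL (.trans .intReal .realNum) (.trans .fltReal .realNum)) .cmplxNum⟩
  | _ => exact ⟨.refl _, .refl _⟩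

theorem declSub_iff_semSub (t1 t2 : Ty) : DeclSub t1 t2 ↔ SemSub t1 t2 := by
  constructor
  · exact decl_sound
  · intro h
    refine .trans (nf_decl t1).1 (.trans (innf_sem_decl (innf_NF t1) ?_) (nf_decl t2).2)
    intro v hv hm
    exact decl_sound (nf_decl t2).1 v hv (h v hv (decl_sound (nf_decl t1).2 v hv hm))
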